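/- Let u = (u_n) satisfy √(u_{n+1}) ≤ u_n + 1 ≤ u_{n+1} for all n. Then every increasing sequence q of positive integers has a subsequence q' such that S_{q',u} strictly contains S_{q,u}. -/

import Mathlib

open Filter

/-- Distance from a real number to the nearest integer. -/
noncomputable def distNearestInt (x : ℝ) : ℝ := |x - round x|

/-- The Liouville set `S_{q,u}` attached to a sequence `q` of positive integers and a
sequence `u` of positive reals. -/
def LSet (q : ℕ → ℕ) (u : ℕ → ℝ) : Set ℝ :=
  {ξ : ℝ | Irrational ξ ∧ ∃ κ₁ κ₂ : ℝ, 0 < κ₁ ∧ 0 < κ₂ ∧ ∃ b : ℕ → ℕ,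
    ∀ᶠ n in Filter.atTop, 1 ≤ b n ∧ (b n : ℝ) ≤ (q n : ℝ) ^ κ₁ ∧
      distNearestInt ((b n : ℝ) * ξ) ≤ (q n : ℝ) ^ (-(κ₂ * u n))}

/-! The witness is the lacunary binary number `ξ = ∑ 2^(-A k)`, read along indices
`J n ≥ 2^(A n)` with `2^(A (n+1)) ≈ q_{J n}^(u n + 10)`. Since `2^(A n) ξ` is an odd integer
plus a tail of size about `2^(A n - A (n+1))`, we get `‖2^(A n) ξ‖ ≤ q_{J n}^(-u n)`, so
`ξ ∈ S_{q∘J,u}`. Conversely, the oddness forces `‖b ξ‖ ≥ 2^(A n - A (n+1)) > q_{J n}^(-(u n + 11))`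
for every `1 ≤ b ≤ 2^(A (n+1) - A n) / 8`; as `u` grows at least like the identity and
`J n ≥ (n + 1)(u n + 11)`, this contradicts `‖b ξ‖ ≤ q_{J n}^(-κ₂ u_{J n})` for large `n`, so
`ξ ∉ S_{q,u}`. The inclusion `S_{q,u} ⊆ S_{q∘J,u}` holds because `u` is increasing. -/

open Real

lemma distNearestInt_le_abs_sub (x : ℝ) (m : ℤ) : distNearestInt x ≤ |x - m| := round_le x m

lemma distNearestInt_intCast_add (m : ℤ) (y : ℝ) :
    distNearestInt (m + y) = distNearestInt y := by
  simp only [distNearestInt, round_intCast_add, Int.cast_add, add_sub_add_left_eq_sub]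

lemma distNearestInt_natCast_add (m : ℕ) (y : ℝ) :
    distNearestInt (m + y) = distNearestInt y := by
  exact_mod_cast distNearestInt_intCast_add m y

lemma distNearestInt_intCast (m : ℤ) : distNearestInt m = 0 := by
  simp [distNearestInt]

lemma distNearestInt_eq_self {y : ℝ} (h₀ : 0 ≤ y) (h : y < 1 / 2) : distNearestInt y = y := by
  rw [distNearestInt, round_eq_zero_iff.mpr ⟨by linarith, h⟩, Int.cast_zero, sub_zero,
    abs_of_nonneg h₀]

lemma distNearestInt_sub_abs_le (x y : ℝ) : distNearestInt x - |y| ≤ distNearestInt (x + y) := by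
  have hround := distNearestInt_le_abs_sub x (round (x + y))
  have htri := abs_add_le (x + y - round (x + y)) (-y)
  rw [abs_neg, show x + y - round (x + y) + -y = x - round (x + y) by ring] at htri
  change distNearestInt x - |y| ≤ |x + y - round (x + y)|
  linarith

lemma inv_le_distNearestInt_intCast_div {m : ℤ} {d : ℕ} (hd : ¬ (d : ℤ) ∣ m) :
    (d : ℝ)⁻¹ ≤ distNearestInt (m / d) := by
  rcases Nat.eq_zero_or_pos d with rfl | hd₀
  · simp [distNearestInt]
  set r := round ((m : ℝ) / d)
  have hne : m - r * d ≠ 0 := fun h => hd ⟨r, by linarith⟩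
  have hd₀' : (0 : ℝ) < d := by exact_mod_cast hd₀
  have h1 : (1 : ℝ) ≤ |((m - r * d : ℤ) : ℝ)| := by exact_mod_cast Int.one_le_abs hne
  rw [distNearestInt, show (m : ℝ) / d - r = ((m - r * d : ℤ) : ℝ) / d by push_cast; field_simp,
    abs_div, Nat.abs_cast, inv_eq_one_div]
  gcongr

lemma irrational_of_forall_distNearestInt_pos {x : ℝ}
    (h : ∀ b : ℕ, 1 ≤ b → 0 < distNearestInt (b * x)) : Irrational x := by
  rintro ⟨r, rfl⟩
  have hr := h r.den r.den_pos
  rwa [show (r.den : ℝ) * r = r.num by rw [Rat.cast_def]; field_simp, distNearestInt_intCast,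
    lt_self_iff_false] at hr

section Lacunary

variable {A : ℕ → ℕ}

noncomputable def lacunarySum (A : ℕ → ℕ) : ℝ := ∑' k, ((2 : ℝ) ^ A k)⁻¹

def lacunaryNum (A : ℕ → ℕ) (n : ℕ) : ℕ := ∑ k ∈ Finset.range (n + 1), 2 ^ (A n - A k)

noncomputable def lacunaryTail (A : ℕ → ℕ) (n : ℕ) : ℝ :=
  2 ^ A n * ∑' k, ((2 : ℝ) ^ A (k + (n + 1)))⁻¹

noncomputable def lacunaryRatio (A : ℕ → ℕ) (n : ℕ) : ℝ := 2 ^ A n / 2 ^ A (n + 1)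

lemma lacunaryRatio_pos (n : ℕ) : 0 < lacunaryRatio A n := by
  unfold lacunaryRatio; positivity

lemma summable_inv_two_pow (hA : StrictMono A) : Summable fun k => ((2 : ℝ) ^ A k)⁻¹ := by
  refine Summable.of_nonneg_of_le (fun _ => by positivity) (fun k => ?_) summable_geometric_two
  rw [one_div, inv_pow]
  exact inv_anti₀ (by positivity) (pow_le_pow_right₀ one_le_two (hA.id_le k))

lemma two_pow_mul_lacunarySum (hA : StrictMono A) (n : ℕ) :
    2 ^ A n * lacunarySum A = lacunaryNum A n + lacunaryTail A n := by
  rw [lacunarySum, ← (summable_inv_two_pow hA).sum_add_tsum_nat_add (n + 1), mul_add,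
    lacunaryTail, lacunaryNum, Finset.mul_sum, Nat.cast_sum]
  congr 1
  refine Finset.sum_congr rfl fun k hk => ?_
  have hkn : A k ≤ A n := hA.monotone (Finset.mem_range_succ_iff.mp hk)
  rw [Nat.cast_pow, Nat.cast_ofNat, pow_sub₀ _ two_ne_zero hkn]

lemma odd_lacunaryNum (hA : StrictMono A) (n : ℕ) : Odd (lacunaryNum A n) := by
  rw [lacunaryNum, Finset.sum_range_succ, Nat.sub_self, pow_zero]
  refine Even.add_one (Finset.even_sum _ fun k hk => ?_)
  exact (Nat.even_pow' (Nat.sub_ne_zero_of_lt (hA (Finset.mem_range.mp hk)))).mpr even_two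

lemma summable_lacunaryTail (hA : StrictMono A) (n : ℕ) :
    Summable fun k => ((2 : ℝ) ^ A (k + (n + 1)))⁻¹ :=
  (summable_nat_add_iff (f := fun k => ((2 : ℝ) ^ A k)⁻¹) (n + 1)).mpr (summable_inv_two_pow hA)

lemma lacunaryRatio_le_lacunaryTail (hA : StrictMono A) (n : ℕ) :
    lacunaryRatio A n ≤ lacunaryTail A n := by
  have hfirst := (summable_lacunaryTail hA n).le_tsum 0 fun _ _ => by positivity
  rw [zero_add] at hfirst
  rw [lacunaryRatio, lacunaryTail, div_eq_mul_inv]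
  gcongr

lemma lacunaryTail_le (hA : StrictMono A) (n : ℕ) :
    lacunaryTail A n ≤ 2 * lacunaryRatio A n := by
  have hle : ∀ k, ((2 : ℝ) ^ A (k + (n + 1)))⁻¹ ≤ (2 ^ A (n + 1))⁻¹ * (1 / 2) ^ k := by
    intro k
    rw [one_div, inv_pow, ← mul_inv, ← pow_add]
    refine inv_anti₀ (by positivity) (pow_le_pow_right₀ one_le_two ?_)
    simpa [add_comm] using hA.add_le_nat k (n + 1)
  have hsum := (summable_lacunaryTail hA n).tsum_le_tsum hle
    (summable_geometric_two.mul_left _)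
  rw [tsum_mul_left, tsum_geometric_two] at hsum
  rw [lacunaryTail, lacunaryRatio, div_eq_mul_inv]
  calc (2 : ℝ) ^ A n * ∑' k, ((2 : ℝ) ^ A (k + (n + 1)))⁻¹
      ≤ 2 ^ A n * ((2 ^ A (n + 1))⁻¹ * 2) := by gcongr
    _ = 2 * (2 ^ A n * (2 ^ A (n + 1))⁻¹) := by ring

lemma lacunaryTail_pos (hA : StrictMono A) (n : ℕ) : 0 < lacunaryTail A n :=
  (lacunaryRatio_pos n).trans_le (lacunaryRatio_le_lacunaryTail hA n)

variable (hA : ∀ n, 2 * A n + 5 ≤ A (n + 1))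
include hA

lemma strictMono_of_two_mul_add_five_le : StrictMono A :=
  strictMono_nat_of_lt_succ fun n => by linarith [hA n]

lemma lacunaryRatio_le_inv_two_pow (n : ℕ) : lacunaryRatio A n ≤ (2 ^ A n)⁻¹ / 32 := by
  have h : (2 : ℝ) ^ (2 * A n + 5) ≤ 2 ^ A (n + 1) := pow_le_pow_right₀ one_le_two (hA n)
  rw [lacunaryRatio, div_le_iff₀ (by positivity)]
  calc (2 : ℝ) ^ A n = (2 ^ A n)⁻¹ / 32 * 2 ^ (2 * A n + 5) := by
        rw [pow_add, pow_mul']; field_simp; norm_num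
    _ ≤ (2 ^ A n)⁻¹ / 32 * 2 ^ A (n + 1) := by gcongr

theorem lacunaryRatio_le_distNearestInt_mul {n b : ℕ} (hb : 1 ≤ b)
    (hb8 : 8 * b * lacunaryRatio A n ≤ 1) :
    lacunaryRatio A n ≤ distNearestInt (b * lacunarySum A) := by
  have hmono := strictMono_of_two_mul_add_five_le hA
  have hsplit := two_pow_mul_lacunarySum hmono n
  have hlow := lacunaryRatio_le_lacunaryTail hmono n
  have hup := lacunaryTail_le hmono n
  have hpos := lacunaryTail_pos hmono n
  have hD : (1 : ℝ) ≤ 2 ^ A n := one_le_pow₀ one_le_two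
  have hlow' := (lacunaryRatio_pos (A := A) n).le
  by_cases hdvd : 2 ^ A n ∣ b
  · obtain ⟨k, rfl⟩ := hdvd
    have hk : (1 : ℝ) ≤ k := by exact_mod_cast Nat.pos_of_mul_pos_left hb
    push_cast at hb8
    have hkε : 8 * k * lacunaryRatio A n ≤ 1 := by
      nlinarith [mul_nonneg (sub_nonneg.2 hD) (mul_nonneg (Nat.cast_nonneg k) hlow')]
    have hkt : k * lacunaryTail A n ≤ 1 / 4 := by nlinarith
    have hexp : ((2 ^ A n * k : ℕ) : ℝ) * lacunarySum A
        = (k * lacunaryNum A n : ℕ) + k * lacunaryTail A n := by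
      push_cast
      linear_combination (k : ℝ) * hsplit
    rw [hexp, distNearestInt_natCast_add, distNearestInt_eq_self (by positivity) (by linarith)]
    nlinarith
  · have hndvd : ¬ ((2 ^ A n : ℕ) : ℤ) ∣ ((b * lacunaryNum A n : ℕ) : ℤ) := by
      rw [Int.natCast_dvd_natCast]
      exact fun h => hdvd <| (Nat.Coprime.pow_left _ <| Nat.coprime_two_left.mpr <|
        odd_lacunaryNum hmono n).dvd_of_dvd_mul_right h
    have hexp : (b : ℝ) * lacunarySum A = (((b * lacunaryNum A n : ℕ) : ℤ) : ℝ) /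
        ((2 ^ A n : ℕ) : ℝ) + b * lacunaryTail A n / 2 ^ A n := by
      rw [show (b : ℝ) * lacunarySum A = b * (2 ^ A n * lacunarySum A) / 2 ^ A n by field_simp,
        hsplit]
      push_cast
      ring
    have herr : |b * lacunaryTail A n / 2 ^ A n| ≤ (2 ^ A n)⁻¹ / 4 := by
      have hbt : b * lacunaryTail A n ≤ 1 / 4 := by nlinarith
      rw [abs_of_nonneg (by positivity)]
      calc b * lacunaryTail A n / 2 ^ A n ≤ 1 / 4 / 2 ^ A n := by gcongr
        _ = (2 ^ A n)⁻¹ / 4 := by ring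
    have hmain := inv_le_distNearestInt_intCast_div hndvd
    have htri := distNearestInt_sub_abs_le ((((b * lacunaryNum A n : ℕ) : ℤ) : ℝ) /
      ((2 ^ A n : ℕ) : ℝ)) (b * lacunaryTail A n / 2 ^ A n)
    rw [← hexp] at htri
    push_cast at hmain htri
    linarith [lacunaryRatio_le_inv_two_pow hA n]

lemma lacunarySum_irrational : Irrational (lacunarySum A) := by
  refine irrational_of_forall_distNearestInt_pos fun b hb => ?_
  refine (lacunaryRatio_pos b).trans_le (lacunaryRatio_le_distNearestInt_mul hA hb ?_)
  have hpow : (b : ℝ) ≤ 2 ^ A b := by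
    exact_mod_cast (Nat.lt_two_pow_self).le.trans
      (Nat.pow_le_pow_right two_pos ((strictMono_of_two_mul_add_five_le hA).id_le b))
  have := lacunaryRatio_le_inv_two_pow hA b
  have := (lacunaryRatio_pos (A := A) b).le
  calc 8 * b * lacunaryRatio A b ≤ 8 * 2 ^ A b * ((2 ^ A b)⁻¹ / 32) := by gcongr
    _ ≤ 1 := by field_simp; norm_num

lemma distNearestInt_two_pow_mul_lacunarySum_le (n : ℕ) :
    distNearestInt (2 ^ A n * lacunarySum A) ≤ 2 * lacunaryRatio A n := by
  have hmono := strictMono_of_two_mul_add_five_le hA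
  have hε := lacunaryRatio_le_inv_two_pow hA n
  have hinv : ((2 : ℝ) ^ A n)⁻¹ ≤ 1 := inv_le_one_of_one_le₀ (one_le_pow₀ one_le_two)
  rw [two_pow_mul_lacunarySum hmono, distNearestInt_natCast_add,
    distNearestInt_eq_self (lacunaryTail_pos hmono n).le (by linarith [lacunaryTail_le hmono n])]
  exact lacunaryTail_le hmono n

end Lacunary

lemma le_two_pow_ceil_logb {x : ℝ} (hx : 0 < x) : x ≤ 2 ^ ⌈logb 2 x⌉₊ :=
  calc x = 2 ^ logb 2 x := (rpow_logb two_pos (by norm_num) hx).symm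
    _ ≤ 2 ^ (⌈logb 2 x⌉₊ : ℝ) := rpow_le_rpow_of_exponent_le one_le_two (Nat.le_ceil _)
    _ = 2 ^ ⌈logb 2 x⌉₊ := rpow_natCast 2 _

lemma two_pow_ceil_logb_lt {x : ℝ} (hx : 1 ≤ x) : (2 : ℝ) ^ ⌈logb 2 x⌉₊ < 2 * x :=
  calc (2 : ℝ) ^ ⌈logb 2 x⌉₊ = 2 ^ (⌈logb 2 x⌉₊ : ℝ) := (rpow_natCast 2 _).symm
    _ < 2 ^ (logb 2 x + 1) := rpow_lt_rpow_of_exponent_lt one_lt_two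
        (Nat.ceil_lt_add_one (logb_nonneg one_lt_two hx))
    _ = 2 * x := by
        rw [rpow_add two_pos, rpow_logb two_pos (by norm_num) (by linarith), rpow_one, mul_comm]

lemma natCast_le_of_add_one_le {u : ℕ → ℝ} (h₀ : 0 ≤ u 0) (hu : ∀ n, u n + 1 ≤ u (n + 1))
    (n : ℕ) : (n : ℝ) ≤ u n := by
  induction n with
  | zero => simpa using h₀
  | succ n ih => push_cast; linarith [hu n]

lemma LSet_subset_LSet_comp {q i : ℕ → ℕ} {u : ℕ → ℝ} (hu : Monotone u) (hq : ∀ n, 0 < q n)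
    (hi : StrictMono i) : LSet q u ⊆ LSet (q ∘ i) u := by
  rintro ξ ⟨hirr, κ₁, κ₂, hκ₁, hκ₂, b, hb⟩
  refine ⟨hirr, κ₁, κ₂, hκ₁, hκ₂, b ∘ i, (hi.tendsto_atTop.eventually hb).mono
    fun n ⟨h₁, h₂, h₃⟩ => ⟨h₁, h₂, h₃.trans ?_⟩⟩
  refine rpow_le_rpow_of_exponent_le (by exact_mod_cast hq (i n)) ?_
  rw [neg_le_neg_iff]
  exact mul_le_mul_of_nonneg_left (hu hi.le_apply) hκ₂.le

section Witness

variable (u : ℕ → ℝ) (q : ℕ → ℕ)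

-- The argument of `q` below is `witnessIndex u q n`, see `witnessExponent_succ`.
noncomputable def witnessExponent : ℕ → ℕ
  | 0 => 0
  | n + 1 => ⌈logb 2 ((q (2 ^ witnessExponent n + ⌈((n : ℝ) + 1) * (u n + 11)⌉₊) : ℝ) ^
      (u n + 10))⌉₊

noncomputable def witnessIndex (n : ℕ) : ℕ :=
  2 ^ witnessExponent u q n + ⌈((n : ℝ) + 1) * (u n + 11)⌉₊

lemma witnessExponent_succ (n : ℕ) : witnessExponent u q (n + 1) =
    ⌈logb 2 ((q (witnessIndex u q n) : ℝ) ^ (u n + 10))⌉₊ := rfl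

variable {u q}

lemma mul_le_witnessIndex (n : ℕ) : ((n : ℝ) + 1) * (u n + 11) ≤ witnessIndex u q n :=
  (Nat.le_ceil _).trans (Nat.cast_le.mpr (Nat.le_add_left _ _))

variable (hu : ∀ n, 0 ≤ u n) (hq : StrictMono q)
include hq

lemma two_pow_witnessExponent_le (n : ℕ) :
    (2 : ℝ) ^ witnessExponent u q n ≤ q (witnessIndex u q n) := by
  exact_mod_cast (Nat.le_add_right _ _).trans (hq.id_le _)

include hu

lemma two_le_witness (n : ℕ) : (2 : ℝ) ≤ q (witnessIndex u q n) := by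
  have h₁ : (2 : ℝ) ≤ (n + 1) * (u n + 11) := by nlinarith [hu n]
  exact h₁.trans ((mul_le_witnessIndex n).trans (by exact_mod_cast hq.id_le _))

lemma le_two_pow_witnessExponent_succ (n : ℕ) :
    (q (witnessIndex u q n) : ℝ) ^ (u n + 10) ≤ 2 ^ witnessExponent u q (n + 1) := by
  rw [witnessExponent_succ]
  exact le_two_pow_ceil_logb (rpow_pos_of_pos (by linarith [two_le_witness hu hq n]) _)

lemma two_pow_witnessExponent_succ_lt (n : ℕ) :
    (2 : ℝ) ^ witnessExponent u q (n + 1) < 2 * (q (witnessIndex u q n) : ℝ) ^ (u n + 10) := by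
  rw [witnessExponent_succ]
  exact two_pow_ceil_logb_lt
    (one_le_rpow (by linarith [two_le_witness hu hq n]) (by linarith [hu n]))

lemma witnessExponent_growth (n : ℕ) :
    2 * witnessExponent u q n + 5 ≤ witnessExponent u q (n + 1) := by
  set Q : ℝ := (q (witnessIndex u q n) : ℝ)
  have hQ2 : 2 ≤ Q := two_le_witness hu hq n
  refine (pow_le_pow_iff_right₀ (one_lt_two : (1 : ℝ) < 2)).mp ?_
  calc (2 : ℝ) ^ (2 * witnessExponent u q n + 5) = (2 ^ witnessExponent u q n) ^ 2 * 2 ^ 5 := by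
        ring
    _ ≤ Q ^ 2 * Q ^ 5 := by gcongr; exact two_pow_witnessExponent_le hq n
    _ = Q ^ ((7 : ℕ) : ℝ) := by rw [rpow_natCast]; ring
    _ ≤ Q ^ (u n + 10) :=
        rpow_le_rpow_of_exponent_le (by linarith) (by push_cast; linarith [hu n])
    _ ≤ 2 ^ witnessExponent u q (n + 1) := le_two_pow_witnessExponent_succ hu hq n

lemma lacunaryRatio_witnessExponent_le (n : ℕ) :
    lacunaryRatio (witnessExponent u q) n ≤ ((q (witnessIndex u q n) : ℝ) ^ u n)⁻¹ / 512 := by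
  set Q : ℝ := (q (witnessIndex u q n) : ℝ)
  have hQ2 : 2 ≤ Q := two_le_witness hu hq n
  have hQ0 : 0 < Q := by linarith
  have hsplit : Q ^ (u n + 10) = Q ^ u n * Q ^ 9 * Q := by
    rw [rpow_add hQ0, show (10 : ℝ) = ((10 : ℕ) : ℝ) by norm_num, rpow_natCast]
    ring
  have h512 : (512 : ℝ) ≤ Q ^ 9 :=
    calc (512 : ℝ) = 2 ^ 9 := by norm_num
      _ ≤ Q ^ 9 := by gcongr
  rw [lacunaryRatio, div_le_iff₀ (by positivity)]
  calc (2 : ℝ) ^ witnessExponent u q n ≤ Q := two_pow_witnessExponent_le hq n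
    _ = (Q ^ u n)⁻¹ / 512 * (Q ^ u n * 512 * Q) := by field_simp
    _ ≤ (Q ^ u n)⁻¹ / 512 * Q ^ (u n + 10) := by rw [hsplit]; gcongr
    _ ≤ (Q ^ u n)⁻¹ / 512 * 2 ^ witnessExponent u q (n + 1) := by
        gcongr; exact le_two_pow_witnessExponent_succ hu hq n

lemma inv_rpow_lt_lacunaryRatio_witnessExponent (n : ℕ) :
    ((q (witnessIndex u q n) : ℝ) ^ (u n + 11))⁻¹ < lacunaryRatio (witnessExponent u q) n := by
  set Q : ℝ := (q (witnessIndex u q n) : ℝ)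
  have hQ2 : 2 ≤ Q := two_le_witness hu hq n
  have hQ0 : 0 < Q := by linarith
  have hsplit : Q ^ (u n + 11) = Q * Q ^ (u n + 10) := by
    rw [show u n + 11 = 1 + (u n + 10) by ring, rpow_add hQ0, rpow_one]
  rw [lacunaryRatio, hsplit, lt_div_iff₀ (by positivity)]
  calc (Q * Q ^ (u n + 10))⁻¹ * 2 ^ witnessExponent u q (n + 1)
      < (Q * Q ^ (u n + 10))⁻¹ * (2 * Q ^ (u n + 10)) := by
        gcongr; exact two_pow_witnessExponent_succ_lt hu hq n
    _ = 2 / Q := by field_simp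
    _ ≤ 1 := by rw [div_le_one hQ0]; exact hQ2
    _ ≤ 2 ^ witnessExponent u q n := one_le_pow₀ one_le_two

lemma strictMono_witnessIndex (hmono : Monotone u) : StrictMono (witnessIndex u q) := by
  have hA := strictMono_of_two_mul_add_five_le (witnessExponent_growth hu hq)
  refine ((pow_right_strictMono₀ one_lt_two).comp hA).add_monotone (Nat.ceil_mono.comp ?_)
  have hlin : Monotone fun n : ℕ => (n : ℝ) + 1 := fun a b h => by simpa using h
  have hshift : Monotone fun n => u n + 11 := fun a b h => by simpa using hmono h
  exact hlin.mul hshift (fun n => by positivity) (fun n => by linarith [hu n])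

lemma lacunarySum_witnessExponent_mem :
    lacunarySum (witnessExponent u q) ∈ LSet (q ∘ witnessIndex u q) u := by
  have hgrowth := witnessExponent_growth hu hq
  refine ⟨lacunarySum_irrational hgrowth, 1, 1, one_pos, one_pos,
    fun n => 2 ^ witnessExponent u q n, Eventually.of_forall fun n => ⟨Nat.one_le_two_pow, ?_, ?_⟩⟩
  · simpa using two_pow_witnessExponent_le hq n
  · have hQ : (0 : ℝ) ≤ q (witnessIndex u q n) := Nat.cast_nonneg _
    have hpos : 0 ≤ ((q (witnessIndex u q n) : ℝ) ^ u n)⁻¹ := by positivity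
    simp only [Function.comp_apply, Nat.cast_pow, Nat.cast_ofNat, one_mul, rpow_neg hQ]
    linarith [distNearestInt_two_pow_mul_lacunarySum_le hgrowth n,
      lacunaryRatio_witnessExponent_le hu hq n]

lemma lacunarySum_witnessExponent_not_mem (hmono : Monotone u) (hun : ∀ n : ℕ, (n : ℝ) ≤ u n) :
    lacunarySum (witnessExponent u q) ∉ LSet q u := by
  rintro ⟨-, κ₁, κ₂, -, hκ₂, b, hb⟩
  obtain ⟨n, ⟨hb₁, hbQ, hdist⟩, hnκ₁, hnκ₂⟩ :=
    (((strictMono_witnessIndex hu hq hmono).tendsto_atTop.eventually hb).and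
      ((tendsto_natCast_atTop_atTop.eventually_ge_atTop κ₁).and
        (tendsto_natCast_atTop_atTop.eventually_ge_atTop κ₂⁻¹))).exists
  set m := witnessIndex u q n
  set Q : ℝ := (q m : ℝ)
  have hQ2 : 2 ≤ Q := two_le_witness hu hq n
  have hQ0 : 0 < Q := by linarith
  have hbu : (b m : ℝ) ≤ Q ^ u n :=
    hbQ.trans (rpow_le_rpow_of_exponent_le (by linarith) (hnκ₁.trans (hun n)))
  have hε := lacunaryRatio_witnessExponent_le hu hq n
  have hb8 : 8 * b m * lacunaryRatio (witnessExponent u q) n ≤ 1 := by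
    calc 8 * b m * lacunaryRatio (witnessExponent u q) n
        ≤ 8 * Q ^ u n * ((Q ^ u n)⁻¹ / 512) := by gcongr; exact (lacunaryRatio_pos n).le
      _ ≤ 1 := by field_simp; norm_num
  have hlt : (Q ^ (u n + 11))⁻¹ < (Q ^ (κ₂ * u m))⁻¹ := by
    rw [← rpow_neg hQ0.le (κ₂ * u m)]
    exact (inv_rpow_lt_lacunaryRatio_witnessExponent hu hq n).trans_le
      ((lacunaryRatio_le_distNearestInt_mul (witnessExponent_growth hu hq) hb₁ hb8).trans hdist)
  have hexp : κ₂ * u m < u n + 11 :=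
    (rpow_lt_rpow_left_iff (by linarith)).mp ((inv_lt_inv₀ (by positivity) (by positivity)).mp hlt)
  have hum : ((n : ℝ) + 1) * (u n + 11) ≤ u m := (mul_le_witnessIndex n).trans (hun m)
  have hκn : 1 ≤ n * κ₂ := (inv_le_iff_one_le_mul₀ hκ₂).mp hnκ₂
  nlinarith [hu n]

end Witness

/-- Every increasing sequence q has a subsequence q' with S_{q,u} ⊊ S_{q',u}. -/
theorem exists_subseq_LSet_ssubset (u : ℕ → ℝ) (hupos : ∀ n, 0 < u n)
    (hu : ∀ n, Real.sqrt (u (n + 1)) ≤ u n + 1 ∧ u n + 1 ≤ u (n + 1))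
    (q : ℕ → ℕ) (hq : StrictMono q) (hqpos : ∀ n, 0 < q n) :
    ∃ i : ℕ → ℕ, StrictMono i ∧ LSet q u ⊂ LSet (q ∘ i) u := by
  have hstep : ∀ n, u n + 1 ≤ u (n + 1) := fun n => (hu n).2
  have hnonneg : ∀ n, 0 ≤ u n := fun n => (hupos n).le
  have hmono : Monotone u := monotone_nat_of_le_succ fun n => by linarith [hstep n]
  have hun := natCast_le_of_add_one_le (hnonneg 0) hstep
  have hi := strictMono_witnessIndex hnonneg hq hmono
  refine ⟨witnessIndex u q, hi,
    (Set.ssubset_iff_of_subset (LSet_subset_LSet_comp hmono hqpos hi)).mpr ?_⟩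
  exact ⟨_, lacunarySum_witnessExponent_mem hnonneg hq,
    lacunarySum_witnessExponent_not_mem hnonneg hq hmono hun⟩
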